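/- arXiv:2006.07218 — 5 statements merged into one kernel-verified Lean document; each statement's English description precedes it below -/
import Mathlib

section
/- Let m ≥ 27 and ζ ≥ 4. Consider a random bipartite graph with vertex parts A = {a_1,…,a_m} and B = {b_1,…,b_m}, where for every i, j ∈ {1,…,m} the edge {a_i, b_j} is present independently with probability p = ζ·log(m)/m. Then the probability that the graph contains a perfect matching between A and B is greater than 1 − e·m^{−2(ζ−1)/3} / (1 − m^{−(ζ−1)/3}). -/
/-!
By Hall's theorem, if there is no perfect matching then some `S` on one side has at most
`#S - 1` neighbours, i.e. all edges from `S` to the complement of some `T` with `#T = #S - 1`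
are missing. Replacing `(S, T)` by `(Tᶜ, Sᶜ)` on the other side, one may take `#S ≤ (m + 1) / 2`.
A union bound over all such pairs gives a failure probability of at most
`∑ₖ 2 C(m, k) C(m, k - 1) (1 - p)^(k (m + 1 - k))`; with `p = ζ log m / m` the `k`-th term is at
most `e x^(k + 1)` for `x = m^(-(ζ - 1)/3)` (bound `C(m, k) C(m, k - 1)` by `m^(2k - 1)` for small
`k` and by `4^m ≤ m^(m/2)` for large `k`), and the geometric series sums to `e x² / (1 - x)`.
-/

open MeasureTheory Finset
open scoped ENNReal NNReal

namespace BipartiteMatching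

section Hall

variable {α : Type*} [Fintype α] {r : α → α → Prop}

theorem exists_hall_violator (h : ¬ ∃ π : Equiv.Perm α, ∀ i, r i (π i)) :
    ∃ S T : Finset α, #T + 1 = #S ∧ ∀ i ∈ S, ∀ j ∉ T, ¬ r i j := by
  classical
  obtain ⟨S, hS⟩ : ∃ S : Finset α, #{j | ∃ i ∈ S, r i j} < #S := by
    by_contra! hall
    obtain ⟨f, hf, hfr⟩ := (Fintype.all_card_le_filter_rel_iff_exists_injective r).mp hall
    exact h ⟨Equiv.ofBijective f hf.bijective_of_finite, hfr⟩
  obtain ⟨T, hNT, -, hT⟩ := exists_subsuperset_card_eq (n := #S - 1)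
    (subset_univ {j | ∃ i ∈ S, r i j}) (by omega)
    (by simpa using (Nat.sub_le _ _).trans (card_le_univ S))
  refine ⟨S, T, by omega, fun i hi j hj hij => hj (hNT ?_)⟩
  simpa using ⟨i, hi, hij⟩

theorem hall_violator_compl [DecidableEq α] {S T : Finset α} (hST : #T + 1 = #S)
    (h : ∀ i ∈ S, ∀ j ∉ T, ¬ r i j) :
    #Sᶜ + 1 = #Tᶜ ∧ ∀ j ∈ Tᶜ, ∀ i ∉ Sᶜ, ¬ r i j := by
  refine ⟨?_, fun j hj i hi => h i (by simpa using hi) j (by simpa using hj)⟩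
  have := card_le_univ S
  rw [card_compl, card_compl]
  omega

theorem exists_small_hall_violator (h : ¬ ∃ π : Equiv.Perm α, ∀ i, r i (π i)) :
    ∃ S T : Finset α, #T + 1 = #S ∧ 2 * #S ≤ Fintype.card α + 1 ∧
      ((∀ i ∈ S, ∀ j ∉ T, ¬ r i j) ∨ (∀ j ∈ S, ∀ i ∉ T, ¬ r i j)) := by
  classical
  obtain ⟨S, T, hST, hS⟩ := exists_hall_violator h
  by_cases hsmall : 2 * #S ≤ Fintype.card α + 1
  · exact ⟨S, T, hST, hsmall, Or.inl hS⟩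
  · obtain ⟨hST', hS'⟩ := hall_violator_compl hST hS
    refine ⟨Tᶜ, Sᶜ, hST', ?_, Or.inr hS'⟩
    rw [card_compl] at hST' ⊢
    have := card_le_univ S
    omega

end Hall

section Probability

def falseOn {ι : Type*} (E : Finset ι) : Set (ι → Bool) := {ω | ∀ e ∈ E, ω e = false}

theorem measure_falseOn {ι : Type*} [Fintype ι] (q : ℝ≥0) (hq : q ≤ 1) (E : Finset ι) :
    Measure.pi (fun _ : ι => (PMF.bernoulli q hq).toMeasure) (falseOn E) = (1 - q) ^ #E := by
  classical
  have hfalse : (PMF.bernoulli q hq).toMeasure {false} = 1 - q := by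
    simp [PMF.bernoulli_apply]
  have hpi : falseOn E = Set.univ.pi fun e => if e ∈ E then {false} else Set.univ := by
    ext ω
    simp only [falseOn, Set.mem_ofPred_eq, Set.mem_pi, Set.mem_univ, true_implies]
    exact forall_congr' fun e => by by_cases he : e ∈ E <;> simp [he]
  rw [hpi, Measure.pi_pi]
  simp only [apply_ite, hfalse, measure_univ]
  rw [prod_ite_mem, univ_inter, prod_const]

theorem measureReal_falseOn {ι : Type*} [Fintype ι] (q : ℝ≥0) (hq : q ≤ 1) (E : Finset ι) :
    (Measure.pi fun _ : ι => (PMF.bernoulli q hq).toMeasure).real (falseOn E) =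
      (1 - (q : ℝ)) ^ #E := by
  rw [measureReal_def, measure_falseOn, ENNReal.toReal_pow, ← ENNReal.coe_one,
    ← ENNReal.coe_sub, ENNReal.coe_toReal, NNReal.coe_sub hq, NNReal.coe_one]

variable {α : Type*} [Fintype α]

theorem not_exists_perm_subset [DecidableEq α] :
    {ω : α × α → Bool | ¬ ∃ π : Equiv.Perm α, ∀ i, ω (i, π i) = true} ⊆
      ⋃ k ∈ Icc 1 ((Fintype.card α + 1) / 2), ⋃ S ∈ powersetCard k (univ : Finset α),
        ⋃ T ∈ powersetCard (k - 1) (univ : Finset α),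
          (falseOn (S ×ˢ Tᶜ) ∪ falseOn (Tᶜ ×ˢ S)) := by
  intro ω hω
  obtain ⟨S, T, hST, hS, hfalse⟩ :=
    exists_small_hall_violator (r := fun i j => ω (i, j) = true) hω
  simp only [Set.mem_iUnion, Set.mem_union, mem_Icc, mem_powersetCard, subset_univ, true_and,
    exists_prop]
  refine ⟨#S, ⟨by omega, by omega⟩, S, rfl, T, by omega, ?_⟩
  simp only [falseOn, Set.mem_ofPred_eq, Prod.forall, mem_product, mem_compl]
  rcases hfalse with h | h
  · exact Or.inl fun i j hij => by simpa using h i hij.1 j hij.2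
  · exact Or.inr fun i j hij => by simpa using h j hij.2 i hij.1

/-- There are `2 C(m, k) C(m, k - 1)` Hall obstructions `(S, T)` with `#S = k` (on either side), each
needing the `k (m + 1 - k)` edges from `S` to `Tᶜ` to be absent. -/
def hallObstructionBound (m k : ℕ) (p : ℝ) : ℝ :=
  2 * m.choose k * m.choose (k - 1) * (1 - p) ^ (k * (m + 1 - k))

theorem measureReal_not_exists_perm_le (q : ℝ≥0) (hq : q ≤ 1) :
    (Measure.pi fun _ : α × α => (PMF.bernoulli q hq).toMeasure).real
        {ω | ¬ ∃ π : Equiv.Perm α, ∀ i, ω (i, π i) = true} ≤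
      ∑ k ∈ Icc 1 ((Fintype.card α + 1) / 2), hallObstructionBound (Fintype.card α) k q := by
  classical
  set μ := Measure.pi fun _ : α × α => (PMF.bernoulli q hq).toMeasure
  have hobstruction : ∀ k ∈ Icc 1 ((Fintype.card α + 1) / 2),
      ∀ S ∈ powersetCard k (univ : Finset α), ∀ T ∈ powersetCard (k - 1) (univ : Finset α),
      μ.real (falseOn (S ×ˢ Tᶜ) ∪ falseOn (Tᶜ ×ˢ S)) ≤
        2 * (1 - (q : ℝ)) ^ (k * (Fintype.card α + 1 - k)) := by
    intro k hk S hS T hT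
    rw [mem_Icc] at hk
    rw [mem_powersetCard] at hS hT
    have hTc : #Tᶜ = Fintype.card α + 1 - k := by
      have := card_le_univ T
      rw [card_compl]
      omega
    refine (measureReal_union_le _ _).trans_eq ?_
    rw [measureReal_falseOn, measureReal_falseOn, card_product, card_product, hS.2, hTc,
      Nat.mul_comm _ k, two_mul]
  calc μ.real {ω | ¬ ∃ π : Equiv.Perm α, ∀ i, ω (i, π i) = true}
      ≤ ∑ k ∈ Icc 1 ((Fintype.card α + 1) / 2), ∑ S ∈ powersetCard k univ,
          ∑ T ∈ powersetCard (k - 1) univ, μ.real (falseOn (S ×ˢ Tᶜ) ∪ falseOn (Tᶜ ×ˢ S)) := by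
        refine (measureReal_mono not_exists_perm_subset (measure_ne_top _ _)).trans ?_
        refine (measureReal_biUnion_finset_le _ _).trans (sum_le_sum fun k _ => ?_)
        refine (measureReal_biUnion_finset_le _ _).trans (sum_le_sum fun S _ => ?_)
        exact measureReal_biUnion_finset_le _ _
    _ ≤ ∑ k ∈ Icc 1 ((Fintype.card α + 1) / 2), ∑ S ∈ powersetCard k univ,
          ∑ T ∈ powersetCard (k - 1) univ, 2 * (1 - (q : ℝ)) ^ (k * (Fintype.card α + 1 - k)) :=
        sum_le_sum fun k hk => sum_le_sum fun S hS => sum_le_sum fun T hT =>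
          hobstruction k hk S hS T hT
    _ = _ := by
        refine sum_congr rfl fun k _ => ?_
        simp only [sum_const, card_powersetCard, card_univ, nsmul_eq_mul, hallObstructionBound]
        ring

end Probability

section Estimates

open Real

theorem choose_mul_choose_pred_le_rpow {m k : ℕ} (hm : 16 ≤ m) (hk : 1 ≤ k) (hkm : 2 * k ≤ m + 1) :
    (m.choose k * m.choose (k - 1) : ℝ) ≤
      (m : ℝ) ^ (4 * (k * (m + 1 - k)) / m - (k + 1) : ℝ) := by
  have hm1 : (1 : ℝ) ≤ m := by exact_mod_cast (by omega : 1 ≤ m)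
  have hm0 : (0 : ℝ) < m := by linarith
  have hk1 : (1 : ℝ) ≤ k := by exact_mod_cast hk
  have hkm' : 2 * (k : ℝ) ≤ m + 1 := by exact_mod_cast hkm
  rcases le_or_gt (4 * k) (m + 4) with hsmall | hlarge
  · have hsmall' : 4 * (k : ℝ) ≤ m + 4 := by exact_mod_cast hsmall
    have hexp : ((2 * k - 1 : ℕ) : ℝ) ≤ 4 * (k * (m + 1 - k)) / m - (k + 1) := by
      rw [le_sub_iff_add_le, le_div_iff₀ hm0, Nat.cast_sub (by omega)]
      push_cast
      nlinarith
    calc (m.choose k * m.choose (k - 1) : ℝ) ≤ (m : ℝ) ^ k * (m : ℝ) ^ (k - 1) := by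
          gcongr <;> exact_mod_cast Nat.choose_le_pow _ _
      _ = (m : ℝ) ^ ((2 * k - 1 : ℕ) : ℝ) := by
          rw [rpow_natCast, ← pow_add]; congr 1; omega
      _ ≤ _ := rpow_le_rpow_of_exponent_le hm1 hexp
  · have hlarge' : (m : ℝ) + 5 ≤ 4 * k := by exact_mod_cast (by omega : m + 5 ≤ 4 * k)
    have hexp : (m : ℝ) / 2 ≤ 4 * (k * (m + 1 - k)) / m - (k + 1) := by
      rw [le_sub_iff_add_le, le_div_iff₀ hm0]
      nlinarith
    calc (m.choose k * m.choose (k - 1) : ℝ) ≤ 2 ^ m * 2 ^ m := by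
          gcongr <;> exact_mod_cast Nat.choose_le_two_pow _ _
      _ = (4 ^ (2 : ℝ)) ^ ((m : ℝ) / 2) := by
          rw [← rpow_mul (by norm_num), mul_div_cancel₀ _ two_ne_zero, rpow_natCast, ← mul_pow]
          norm_num
      _ ≤ (m : ℝ) ^ ((m : ℝ) / 2) := by
          gcongr
          norm_num
          exact_mod_cast hm
      _ ≤ _ := rpow_le_rpow_of_exponent_le hm1 hexp

theorem one_sub_pow_le_rpow {m : ℝ} (hm : 0 < m) {ζ p : ℝ} (hp : p = ζ * log m / m) (hp1 : p ≤ 1)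
    (n : ℕ) : (1 - p) ^ n ≤ m ^ (-(ζ * n / m)) := by
  calc (1 - p) ^ n ≤ exp (-p) ^ n := pow_le_pow_left₀ (by linarith) (one_sub_le_exp_neg p) n
    _ = m ^ (-(ζ * n / m)) := by
        rw [← exp_nat_mul, rpow_def_of_pos hm, hp]
        ring_nf

theorem hallObstructionBound_le {m k : ℕ} (hm : 16 ≤ m) (hk : 1 ≤ k) (hkm : 2 * k ≤ m + 1)
    {ζ p : ℝ} (hζ : 4 ≤ ζ) (hp : p = ζ * log m / m) (hp1 : p ≤ 1) :
    hallObstructionBound m k p ≤ exp 1 * ((m : ℝ) ^ (-((ζ - 1) / 3))) ^ (k + 1) := by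
  have hm1 : (1 : ℝ) ≤ m := by exact_mod_cast (by omega : 1 ≤ m)
  have hm0 : (0 : ℝ) < m := by linarith
  have hk1 : (1 : ℝ) ≤ k := by exact_mod_cast hk
  have hkm' : 2 * (k : ℝ) ≤ m + 1 := by exact_mod_cast hkm
  have hE : ((k * (m + 1 - k) : ℕ) : ℝ) = k * (m + 1 - k) := by
    push_cast [(by omega : k ≤ m + 1)]; ring
  set E : ℝ := k * (m + 1 - k)
  -- `3 E ≥ (k + 1) m` is what lets the exponent absorb the increase of `ζ` beyond `4`.
  have hexp : 4 * E / m - (k + 1) + -(ζ * E / m) ≤ -((ζ - 1) / 3) * (k + 1) := by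
    have h3E : (k + 1) * (m : ℝ) ≤ 3 * E := by nlinarith
    rw [← sub_nonneg]
    have : -((ζ - 1) / 3) * (k + 1) - (4 * E / m - (k + 1) + -(ζ * E / m)) =
        (ζ - 4) * (3 * E - (k + 1) * m) / (3 * m) := by
      field_simp
      ring
    rw [this]
    apply div_nonneg (mul_nonneg (by linarith) (by linarith)) (by positivity)
  calc hallObstructionBound m k p
      = 2 * (m.choose k * m.choose (k - 1) : ℝ) * (1 - p) ^ (k * (m + 1 - k)) := by
        rw [hallObstructionBound, mul_assoc 2]
    _ ≤ exp 1 * (m : ℝ) ^ (4 * E / m - (k + 1)) * (m : ℝ) ^ (-(ζ * E / m)) := by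
        gcongr
        · linarith [add_one_le_exp 1]
        · exact choose_mul_choose_pred_le_rpow hm hk hkm
        · rw [← hE]; exact one_sub_pow_le_rpow hm0 hp hp1 _
    _ ≤ exp 1 * (m : ℝ) ^ (-((ζ - 1) / 3) * (k + 1)) := by
        rw [mul_assoc, ← rpow_add hm0]
        gcongr
    _ = exp 1 * ((m : ℝ) ^ (-((ζ - 1) / 3))) ^ (k + 1) := by
        rw [rpow_mul hm0.le, ← Nat.cast_add_one, rpow_natCast]

theorem geom_sum_Icc_pow_succ_lt {x : ℝ} (hx0 : 0 < x) (hx1 : x < 1) (K : ℕ) :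
    ∑ k ∈ Icc 1 K, x ^ (k + 1) < x ^ 2 / (1 - x) := by
  have : ∑ k ∈ Icc 1 K, x ^ (k + 1) = ∑ i ∈ Ico 2 (K + 2), x ^ i := by
    rw [← Ico_add_one_right_eq_Icc, sum_Ico_add' (fun i => x ^ i)]
  rw [this, geom_sum_Ico' hx1.ne (by omega)]
  gcongr
  exact sub_lt_self _ (pow_pos hx0 _)

theorem rpow_neg_le_inv {m ζ : ℝ} (hm : 1 ≤ m) (hζ : 4 ≤ ζ) : m ^ (-((ζ - 1) / 3)) ≤ m⁻¹ := by
  rw [← rpow_neg_one]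
  exact rpow_le_rpow_of_exponent_le hm (by linarith)

theorem sum_hallObstructionBound_lt {m : ℕ} (hm : 16 ≤ m) {ζ p : ℝ} (hζ : 4 ≤ ζ)
    (hp : p = ζ * log m / m) (hp1 : p ≤ 1) :
    ∑ k ∈ Icc 1 ((m + 1) / 2), hallObstructionBound m k p <
      exp 1 * ((m : ℝ) ^ (-((ζ - 1) / 3))) ^ 2 / (1 - (m : ℝ) ^ (-((ζ - 1) / 3))) := by
  set x := (m : ℝ) ^ (-((ζ - 1) / 3))
  have hm1 : (1 : ℝ) < m := by exact_mod_cast (by omega : 1 < m)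
  have hx0 : 0 < x := rpow_pos_of_pos (by linarith) _
  have hx1 : x < 1 := (rpow_neg_le_inv hm1.le hζ).trans_lt (inv_lt_one_of_one_lt₀ hm1)
  calc ∑ k ∈ Icc 1 ((m + 1) / 2), hallObstructionBound m k p
      ≤ ∑ k ∈ Icc 1 ((m + 1) / 2), exp 1 * x ^ (k + 1) := by
        refine sum_le_sum fun k hk => ?_
        rw [mem_Icc] at hk
        exact hallObstructionBound_le hm hk.1 (by omega) hζ hp hp1
    _ < exp 1 * (x ^ 2 / (1 - x)) := by
        rw [← mul_sum]
        gcongr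
        exact geom_sum_Icc_pow_succ_lt hx0 hx1 _
    _ = _ := (mul_div_assoc _ _ _).symm

theorem exp_one_mul_sq_div_one_sub_lt_one {x : ℝ} (hx0 : 0 ≤ x) (hx : x ≤ 1 / 3) :
    exp 1 * x ^ 2 / (1 - x) < 1 := by
  rw [div_lt_one (by linarith)]
  nlinarith [exp_one_lt_d9]

end Estimates

end BipartiteMatching

open BipartiteMatching

/-- Random bipartite matching lemma: in a random bipartite graph with parts of size `m ≥ 27`
in which each edge is present independently with probability `p = ζ log(m)/m` (`ζ ≥ 4`),
the probability that a perfect matching exists is greater than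
`1 − e·m^{−2(ζ−1)/3}/(1 − m^{−(ζ−1)/3})`. -/
theorem stmt_13 (m : ℕ) (hm : 27 ≤ m) (ζ : ℝ) (hζ : 4 ≤ ζ)
    (p : ℝ) (hp : p = ζ * Real.log m / m) (hp1 : p ≤ 1) :
    ENNReal.ofReal
        (1 - Real.exp 1 * (m : ℝ) ^ (-(2 * (ζ - 1) / 3)) /
          (1 - (m : ℝ) ^ (-((ζ - 1) / 3)))) <
      (Measure.pi fun _ : Fin m × Fin m =>
          (PMF.bernoulli (Real.toNNReal p) (Real.toNNReal_le_one.mpr hp1)).toMeasure)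
        {ω | ∃ π : Equiv.Perm (Fin m), ∀ i, ω (i, π i) = true} := by
  set μ := Measure.pi fun _ : Fin m × Fin m =>
    (PMF.bernoulli (Real.toNNReal p) (Real.toNNReal_le_one.mpr hp1)).toMeasure
  set x := (m : ℝ) ^ (-((ζ - 1) / 3))
  have hm1 : (1 : ℝ) ≤ m := by exact_mod_cast (by omega : 1 ≤ m)
  have hp0 : 0 ≤ p := by rw [hp]; have := Real.log_nonneg hm1; positivity
  have hx2 : (m : ℝ) ^ (-(2 * (ζ - 1) / 3)) = x ^ 2 := by
    rw [← Real.rpow_natCast, ← Real.rpow_mul (by linarith)]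
    ring_nf
  have hfail : μ.real {ω | ∃ π : Equiv.Perm (Fin m), ∀ i, ω (i, π i) = true}ᶜ <
      Real.exp 1 * x ^ 2 / (1 - x) := by
    have := measureReal_not_exists_perm_le (α := Fin m) _ (Real.toNNReal_le_one.mpr hp1)
    rw [Fintype.card_fin, Real.coe_toNNReal _ hp0] at this
    exact this.trans_lt (sum_hallObstructionBound_lt (by omega) hζ hp hp1)
  have hx : x ≤ 1 / 3 := (rpow_neg_le_inv hm1 hζ).trans
    ((inv_anti₀ (by norm_num) (by exact_mod_cast (by omega : 3 ≤ m))).trans_eq (inv_eq_one_div 3))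
  have hc : Real.exp 1 * x ^ 2 / (1 - x) < 1 :=
    exp_one_mul_sq_div_one_sub_lt_one (Real.rpow_pos_of_pos (by linarith) _).le hx
  rw [probReal_compl_eq_one_sub (Set.toFinite _).measurableSet] at hfail
  rw [hx2, ← ofReal_measureReal, ENNReal.ofReal_lt_ofReal_iff (by linarith)]
  linarith
end

section
/- Let m ≥ 27 and δ_b > 0, and set ζ = max(4, 1 + 3·log(2e/δ_b)/(2·log m)). Consider a random bipartite graph with parts A and B each of size m, where each of the m² possible edges is present independently with probability p = ζ·log(m)/m. Then with probability at least 1 − δ_b the graph contains a perfect matching between A and B. -/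
open MeasureTheory Finset
open scoped ENNReal NNReal Nat

/-!
Without a perfect matching, Hall's theorem gives a set `S` of `k` vertices on one side whose
neighbours all lie in a set `T` of `k - 1` vertices; passing to the complementary pair on the other
side if necessary, `2 k ≤ m + 1`. A given such pair occurs with probability
`(1 - p) ^ (k (m + 1 - k)) ≤ m ^ (-ζ g)`, where `g = k (m + 1 - k) / m ≥ 1`, and there are
`C(m, k) C(m, k - 1) ≤ e m ^ (4 g - 3)` of them (from `C(m, k) ≤ (e m / k) ^ k`). As `g ≥ 1` and
`ζ ≥ 4`, each `k` contributes at most `2 e m ^ (1 - ζ)`, all of them together at most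
`2 e m ^ (2 - ζ)`, and this is at most `δ_b` for the given `ζ`.
-/

section

open Real

theorem Nat.choose_le_choose_succ {n k : ℕ} (h : 2 * k + 1 ≤ n) :
    n.choose k ≤ n.choose (k + 1) := by
  refine Nat.le_of_mul_le_mul_right (c := k + 1) ?_ k.succ_pos
  rw [Nat.choose_succ_right_eq]
  exact Nat.mul_le_mul_left _ (by omega)

theorem Nat.choose_le_exp_one_mul_div_pow (n k : ℕ) :
    (n.choose k : ℝ) ≤ (exp 1 * n / k) ^ k := by
  rcases k.eq_zero_or_pos with rfl | hk
  · simp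
  have hk' : (0 : ℝ) < k := by exact_mod_cast hk
  calc (n.choose k : ℝ) ≤ n ^ k / k ! := Nat.choose_le_pow_div k n
    _ = n ^ k / k ^ k * ((k : ℝ) ^ k / k !) := by field_simp
    _ ≤ n ^ k / k ^ k * exp k := by gcongr; exact pow_div_factorial_le_exp _ hk'.le k
    _ = (exp 1 * n / k) ^ k := by rw [← exp_one_pow]; ring

theorem two_mul_one_add_log_sub_log_le {m k : ℕ} (hm : 27 ≤ m) (hk : 2 ≤ k)
    (hkm : 2 * k ≤ m + 1) :
    2 * k * (1 + log m - log k) ≤ 1 + (4 * (k * (m + 1 - k) / m) - 3) * log m := by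
  have hm' : (27 : ℝ) ≤ m := by exact_mod_cast hm
  have hk' : (2 : ℝ) ≤ k := by exact_mod_cast hk
  have hkm' : 2 * (k : ℝ) ≤ m + 1 := by exact_mod_cast hkm
  have hL : 3 ≤ log m := by
    rw [le_log_iff_exp_le (by positivity), show (3 : ℝ) = (3 : ℕ) by norm_num, ← exp_one_pow]
    calc exp 1 ^ 3 ≤ (3 : ℝ) ^ 3 := by gcongr; linarith [exp_one_lt_d9]
      _ ≤ (m : ℝ) := by linarith
  set c := 2 * (k : ℝ) - 3 - 4 * k * (k - 1) / m with hc
  have hcm : c * m = (2 * k - 3) * m - 4 * k * (k - 1) := by rw [hc]; field_simp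
  have hsplit : 1 + (4 * (k * (m + 1 - k) / m) - 3) * log m - 2 * k * (1 + log m - log k)
      = 1 + c * log m + 2 * k * (log k - 1) := by
    rw [hc]; field_simp; ring
  rw [← sub_nonneg, hsplit]
  rcases Nat.lt_or_ge m (2 * k + 2) with hmid | hsmall
  · -- `k` is close to `m / 2`
    have hmid' : (m : ℝ) ≤ 2 * k + 1 := by exact_mod_cast Nat.lt_succ_iff.mp hmid
    have hc2 : -2 ≤ c := by nlinarith
    have hlogk : 2 ≤ log k := by
      rw [le_log_iff_exp_le (by positivity), show (2 : ℝ) = (2 : ℕ) by norm_num,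
        ← exp_one_pow]
      nlinarith [exp_one_lt_d9, exp_pos 1]
    have hLk : log m ≤ 2 * log k := by
      rw [← log_rpow (by positivity)]
      exact log_le_log (by positivity) (by norm_cast; nlinarith)
    nlinarith
  · have hsmall' : 2 * (k : ℝ) + 2 ≤ m := by exact_mod_cast hsmall
    obtain rfl | hk3 := hk.eq_or_lt
    · norm_num at hcm ⊢
      have hc0 : 19 / 27 ≤ c := by nlinarith
      nlinarith [log_two_gt_d9]
    · have hk3' : (3 : ℝ) ≤ k := by exact_mod_cast hk3
      have hc0 : 0 ≤ c := by nlinarith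
      have hlogk : 1 ≤ log k := by
        rw [le_log_iff_exp_le (by positivity)]
        linarith [exp_one_lt_d9]
      nlinarith

theorem choose_mul_choose_pred_le_exp {m k : ℕ} (hm : 27 ≤ m) (hk : 1 ≤ k)
    (hkm : 2 * k ≤ m + 1) :
    (m.choose k * m.choose (k - 1) : ℝ) ≤
      exp (1 + (4 * (k * (m + 1 - k) / m) - 3) * log m) := by
  have hm0 : (0 : ℝ) < m := by positivity
  obtain rfl | hk2 := hk.eq_or_lt
  · have : (4 * ((1 : ℕ) * (m + 1 - (1 : ℕ)) / m : ℝ) - 3) = 1 := by field_simp; ring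
    rw [this, one_mul, exp_add, exp_log hm0]
    simpa using le_mul_of_one_le_left hm0.le (one_le_exp zero_le_one)
  have hk0 : (0 : ℝ) < k := by positivity
  have hpred : m.choose (k - 1) ≤ m.choose k := by
    simpa [Nat.sub_add_cancel hk] using Nat.choose_le_choose_succ (k := k - 1) (by omega)
  have hbase : exp 1 * m / k = exp (1 + log m - log k) := by
    rw [exp_sub, exp_add, exp_log hm0, exp_log hk0]
  calc (m.choose k * m.choose (k - 1) : ℝ) ≤ (m.choose k : ℝ) ^ 2 := by
        rw [sq]; gcongr
    _ ≤ ((exp 1 * m / k) ^ k) ^ 2 := by gcongr; exact Nat.choose_le_exp_one_mul_div_pow m k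
    _ = exp (2 * k * (1 + log m - log k)) := by
        rw [hbase, ← exp_nat_mul, ← exp_nat_mul]; push_cast; ring_nf
    _ ≤ _ := exp_le_exp.mpr (two_mul_one_add_log_sub_log_le hm hk2 hkm)

theorem choose_mul_choose_pred_mul_one_sub_pow_le {m k : ℕ} {ζ : ℝ} (hm : 27 ≤ m)
    (hζ : 4 ≤ ζ) (hp1 : ζ * log m / m ≤ 1) (hk : 1 ≤ k) (hkm : 2 * k ≤ m + 1) :
    (m.choose k * m.choose (k - 1) : ℝ) * (1 - ζ * log m / m) ^ (k * (m + 1 - k)) ≤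
      exp (1 + (1 - ζ) * log m) := by
  have hm0 : (0 : ℝ) < m := by positivity
  have hL : 0 ≤ log m := log_nonneg (by exact_mod_cast hm0)
  set g : ℝ := k * (m + 1 - k) / m with hg
  have hg1 : 1 ≤ g := by
    rw [hg, le_div_iff₀ hm0]
    have : (1 : ℝ) ≤ k := by exact_mod_cast hk
    have : (k : ℝ) ≤ m := by exact_mod_cast (by omega : k ≤ m)
    nlinarith
  have hpow : (1 - ζ * log m / m) ^ (k * (m + 1 - k)) ≤ exp (-(ζ * log m * g)) := by
    calc (1 - ζ * log m / m) ^ (k * (m + 1 - k))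
        ≤ exp (-(ζ * log m / m)) ^ (k * (m + 1 - k)) :=
          pow_le_pow_left₀ (by linarith) (one_sub_le_exp_neg _) _
      _ = exp (-(ζ * log m * g)) := by
          rw [← exp_nat_mul, hg, Nat.cast_mul, Nat.cast_sub (by omega)]
          push_cast; ring_nf
  calc (m.choose k * m.choose (k - 1) : ℝ) * (1 - ζ * log m / m) ^ (k * (m + 1 - k))
      ≤ exp (1 + (4 * g - 3) * log m) * exp (-(ζ * log m * g)) := by
        gcongr
        exact choose_mul_choose_pred_le_exp hm hk hkm
    _ ≤ exp (1 + (1 - ζ) * log m) := by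
        rw [← exp_add]
        refine exp_le_exp.mpr ?_
        nlinarith [mul_nonneg (mul_nonneg (sub_nonneg.mpr hζ) (sub_nonneg.mpr hg1)) hL]

theorem two_mul_exp_le_of_max_le {L δ ζ : ℝ} (hL : 0 < L) (hδ : 0 < δ)
    (hζ : max 4 (1 + 3 * log (2 * exp 1 / δ) / (2 * L)) ≤ ζ) :
    2 * exp (1 + (2 - ζ) * L) ≤ δ := by
  have hζ4 : 4 ≤ ζ := (le_max_left _ _).trans hζ
  have hζδ : 3 * log (2 * exp 1 / δ) / (2 * L) ≤ ζ - 1 := by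
    linarith [(le_max_right _ _).trans hζ]
  -- `ζ ≥ 4` gives `2 (ζ - 1) / 3 ≤ ζ - 2`
  have hlog : log (2 * exp 1 / δ) ≤ (ζ - 2) * L := by
    nlinarith [(div_le_iff₀ (by positivity)).mp hζδ]
  calc 2 * exp (1 + (2 - ζ) * L) ≤ 2 * exp (1 - log (2 * exp 1 / δ)) := by gcongr; linarith
    _ = δ := by rw [exp_sub, exp_log (by positivity)]; field_simp

end

theorem measure_pi_bernoulli_forall_eq_false {ι : Type*} [Fintype ι] (q : ℝ≥0) (hq : q ≤ 1)
    (F : Finset ι) :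
    Measure.pi (fun _ : ι => (PMF.bernoulli q hq).toMeasure) {ω | ∀ i ∈ F, ω i = false} =
      (1 - q : ℝ≥0∞) ^ #F := by
  have hset : {ω : ι → Bool | ∀ i ∈ F, ω i = false} = Set.pi F fun _ => {false} := by
    ext; simp
  rw [hset, Measure.pi_pi_finset, PMF.toMeasure_apply_singleton _ _ (measurableSet_singleton _),
    PMF.bernoulli_apply, prod_const]
  rfl

theorem measure_biUnion_finset_le_card_mul {ι α : Type*} [MeasurableSpace α] (μ : Measure α)
    (s : Finset ι) (f : ι → Set α) (c : ℝ≥0∞) (h : ∀ i ∈ s, μ (f i) ≤ c) :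
    μ (⋃ i ∈ s, f i) ≤ #s * c :=
  (measure_biUnion_finset_le s f).trans (by simpa using sum_le_card_nsmul s _ c h)

/-- Hall's marriage theorem. -/
theorem exists_card_eq_succ_of_not_exists_perm {α : Type*} [Fintype α] [DecidableEq α]
    (r : α → α → Prop) (h : ¬ ∃ π : Equiv.Perm α, ∀ i, r i (π i)) :
    ∃ S T : Finset α, #S = #T + 1 ∧ ∀ i ∈ S, ∀ j ∉ T, ¬ r i j := by
  classical
  set nbhd : α → Finset α := fun i => univ.filter (r i)
  have hHall : ¬ ∀ S : Finset α, #S ≤ #(S.biUnion nbhd) := by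
    intro hall
    obtain ⟨f, hf, hfr⟩ := (all_card_le_biUnion_card_iff_exists_injective nbhd).mp hall
    exact h ⟨Equiv.ofBijective f (Finite.injective_iff_bijective.mp hf), fun i => by
      simpa [nbhd] using hfr i⟩
  simp only [not_forall, not_le] at hHall
  obtain ⟨S, hS⟩ := hHall
  obtain ⟨T, hNT, hT⟩ := exists_superset_card_eq (s := S.biUnion nbhd) (n := #S - 1) (by omega)
    ((Nat.sub_le _ _).trans (card_le_univ S))
  refine ⟨S, T, by omega, fun i hi j hj hij => hj (hNT ?_)⟩
  exact mem_biUnion.mpr ⟨i, hi, by simpa [nbhd] using hij⟩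

/-- Either the obstruction `(S, T)` or the transposed one `(Tᶜ, Sᶜ)` has at most half the
rows (their sizes add up to `n + 1`). -/
theorem exists_small_obstruction_of_not_exists_perm {α : Type*} [Fintype α] [DecidableEq α]
    (r : α → α → Prop) (h : ¬ ∃ π : Equiv.Perm α, ∀ i, r i (π i)) :
    ∃ S T : Finset α, #S = #T + 1 ∧ 2 * #S ≤ Fintype.card α + 1 ∧
      ((∀ i ∈ S, ∀ j ∉ T, ¬ r i j) ∨ (∀ j ∈ S, ∀ i ∉ T, ¬ r i j)) := by
  obtain ⟨S, T, hST, hr⟩ := exists_card_eq_succ_of_not_exists_perm r h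
  have hS := card_compl S
  have hT := card_compl T
  have hSn := card_le_univ S
  by_cases hsmall : 2 * #S ≤ Fintype.card α + 1
  · exact ⟨S, T, hST, hsmall, Or.inl hr⟩
  · refine ⟨Tᶜ, Sᶜ, by omega, by omega, Or.inr fun j hj i hi => ?_⟩
    exact hr i (by simpa using hi) j (by simpa using hj)

theorem measure_pi_bernoulli_not_exists_perm_le {α : Type*} [Fintype α] [DecidableEq α]
    (q : ℝ≥0) (hq : q ≤ 1) :
    Measure.pi (fun _ : α × α => (PMF.bernoulli q hq).toMeasure)
        {ω | ¬ ∃ σ : Equiv.Perm α, ∀ i, ω (i, σ i) = true} ≤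
      ∑ k ∈ Icc 1 ((Fintype.card α + 1) / 2),
        2 * (Fintype.card α).choose k * (Fintype.card α).choose (k - 1) *
          (1 - q : ℝ≥0∞) ^ (k * (Fintype.card α + 1 - k)) := by
  set n := Fintype.card α
  set μ := Measure.pi fun _ : α × α => (PMF.bernoulli q hq).toMeasure
  let bad : Finset α → Finset α → Set (α × α → Bool) := fun S T =>
    {ω | ∀ x ∈ S ×ˢ Tᶜ, ω x = false} ∪ {ω | ∀ x ∈ Tᶜ ×ˢ S, ω x = false}
  have hcover : {ω : α × α → Bool | ¬ ∃ σ : Equiv.Perm α, ∀ i, ω (i, σ i) = true} ⊆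
      ⋃ k ∈ Icc 1 ((n + 1) / 2), ⋃ S ∈ powersetCard k univ,
        ⋃ T ∈ powersetCard (k - 1) univ, bad S T := by
    intro ω hω
    obtain ⟨S, T, hST, hS, hr⟩ :=
      exists_small_obstruction_of_not_exists_perm (fun i j => ω (i, j) = true) hω
    simp only [Set.mem_iUnion, mem_Icc, mem_powersetCard_univ, exists_prop]
    refine ⟨#S, ⟨by omega, by omega⟩, S, rfl, T, by omega, ?_⟩
    rcases hr with hr | hr
    · exact Or.inl fun x hx => by
        simp only [mem_product, mem_compl] at hx
        simpa using hr x.1 hx.1 x.2 hx.2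
    · exact Or.inr fun x hx => by
        simp only [mem_product, mem_compl] at hx
        simpa using hr x.2 hx.2 x.1 hx.1
  have hbad : ∀ k, 1 ≤ k → ∀ S T : Finset α, #S = k → #T = k - 1 →
      μ (bad S T) ≤ 2 * (1 - q : ℝ≥0∞) ^ (k * (n + 1 - k)) := by
    intro k hk S T hS hT
    have hTc : #Tᶜ = n + 1 - k := by rw [card_compl, hT]; omega
    refine (measure_union_le _ _).trans_eq ?_
    rw [measure_pi_bernoulli_forall_eq_false, measure_pi_bernoulli_forall_eq_false,
      card_product, card_product, hS, hTc, mul_comm (n + 1 - k), two_mul]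
  calc μ _ ≤ μ (⋃ k ∈ Icc 1 ((n + 1) / 2), ⋃ S ∈ powersetCard k univ,
        ⋃ T ∈ powersetCard (k - 1) univ, bad S T) := measure_mono hcover
    _ ≤ ∑ k ∈ Icc 1 ((n + 1) / 2), μ (⋃ S ∈ powersetCard k univ,
        ⋃ T ∈ powersetCard (k - 1) univ, bad S T) := measure_biUnion_finset_le _ _
    _ ≤ ∑ k ∈ Icc 1 ((n + 1) / 2), #(powersetCard k (univ : Finset α)) *
        (#(powersetCard (k - 1) (univ : Finset α)) *
          (2 * (1 - q : ℝ≥0∞) ^ (k * (n + 1 - k)))) := by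
      gcongr with k hk
      refine measure_biUnion_finset_le_card_mul _ _ _ _ fun S hS => ?_
      refine measure_biUnion_finset_le_card_mul _ _ _ _ fun T hT => ?_
      exact hbad k (mem_Icc.mp hk).1 S T (mem_powersetCard_univ.mp hS) (mem_powersetCard_univ.mp hT)
    _ = _ := by
      simp only [card_powersetCard, card_univ]
      exact sum_congr rfl fun k _ => by ring

open Real in
theorem measure_pi_bernoulli_not_exists_perm_le_exp {m : ℕ} {ζ : ℝ} (hm : 27 ≤ m)
    (hζ : 4 ≤ ζ) (hp1 : ζ * log m / m ≤ 1) :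
    Measure.pi (fun _ : Fin m × Fin m =>
        (PMF.bernoulli (toNNReal (ζ * log m / m)) (toNNReal_le_one.mpr hp1)).toMeasure)
        {ω | ¬ ∃ σ : Equiv.Perm (Fin m), ∀ i, ω (i, σ i) = true} ≤
      ENNReal.ofReal (2 * exp (1 + (2 - ζ) * log m)) := by
  set p := ζ * log m / m
  have hp0 : 0 ≤ p := by have := log_nonneg (Nat.one_le_cast.mpr (by omega : 1 ≤ m)); positivity
  have hq : (1 - toNNReal p : ℝ≥0∞) = ENNReal.ofReal (1 - p) := by
    rw [ENNReal.ofReal_sub 1 hp0, ENNReal.ofReal_one]; rfl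
  have hterm : ∀ k ∈ Icc 1 ((m + 1) / 2), 2 * (m.choose k : ℝ≥0∞) * m.choose (k - 1) *
      (1 - toNNReal p : ℝ≥0∞) ^ (k * (m + 1 - k)) ≤
        ENNReal.ofReal (2 * exp (1 + (1 - ζ) * log m)) := by
    intro k hk
    obtain ⟨hk1, hkm⟩ := mem_Icc.mp hk
    rw [hq, ← ENNReal.ofReal_pow (by linarith), ← ENNReal.ofReal_natCast,
      ← ENNReal.ofReal_natCast, ← ENNReal.ofReal_ofNat 2, ← ENNReal.ofReal_mul (by norm_num),
      ← ENNReal.ofReal_mul (by positivity), ← ENNReal.ofReal_mul (by positivity), mul_assoc,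
      mul_assoc]
    refine ENNReal.ofReal_le_ofReal (mul_le_mul_of_nonneg_left ?_ zero_le_two)
    rw [← mul_assoc]
    exact choose_mul_choose_pred_mul_one_sub_pow_le hm hζ hp1 hk1 (by omega)
  have hsum :=
    measure_pi_bernoulli_not_exists_perm_le (α := Fin m) (toNNReal p) (toNNReal_le_one.mpr hp1)
  simp only [Fintype.card_fin] at hsum
  calc _ ≤ _ := hsum
    _ ≤ ∑ _k ∈ Icc 1 ((m + 1) / 2), ENNReal.ofReal (2 * exp (1 + (1 - ζ) * log m)) :=
        sum_le_sum hterm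
    _ ≤ m * ENNReal.ofReal (2 * exp (1 + (1 - ζ) * log m)) := by
        rw [sum_const, Nat.card_Icc, nsmul_eq_mul]
        gcongr
        omega
    _ = ENNReal.ofReal (2 * exp (1 + (2 - ζ) * log m)) := by
        rw [← ENNReal.ofReal_natCast, ← ENNReal.ofReal_mul (by positivity)]
        congr 1
        rw [show 1 + (2 - ζ) * log m = log m + (1 + (1 - ζ) * log m) by ring, exp_add (log m),
          exp_log (by positivity)]
        ring

/-- Random bipartite matching with confidence parameter: for `m ≥ 27`, `δ_b > 0` and
`ζ = max(4, 1 + 3 log(2e/δ_b)/(2 log m))`, a random bipartite graph with parts of size `m`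
and edge probability `p = ζ log(m)/m` contains a perfect matching with probability at
least `1 − δ_b`. -/
theorem stmt_14 (m : ℕ) (hm : 27 ≤ m) (δb : ℝ) (hδb : 0 < δb)
    (ζ : ℝ) (hζ : ζ = max 4 (1 + 3 * Real.log (2 * Real.exp 1 / δb) / (2 * Real.log m)))
    (p : ℝ) (hp : p = ζ * Real.log m / m) (hp1 : p ≤ 1) :
    ENNReal.ofReal (1 - δb) ≤
      (Measure.pi fun _ : Fin m × Fin m =>
          (PMF.bernoulli (Real.toNNReal p) (Real.toNNReal_le_one.mpr hp1)).toMeasure)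
        {ω | ∃ π : Equiv.Perm (Fin m), ∀ i, ω (i, π i) = true} := by
  subst hp
  have hL : 0 < Real.log m := Real.log_pos (by exact_mod_cast (by omega : 1 < m))
  set μ := Measure.pi fun _ : Fin m × Fin m =>
    (PMF.bernoulli (Real.toNNReal (ζ * Real.log m / m)) (Real.toNNReal_le_one.mpr hp1)).toMeasure
  set E := {ω : Fin m × Fin m → Bool | ∃ π : Equiv.Perm (Fin m), ∀ i, ω (i, π i) = true}
  have hbad : μ Eᶜ ≤ ENNReal.ofReal δb :=
    (measure_pi_bernoulli_not_exists_perm_le_exp hm (hζ ▸ le_max_left _ _) hp1).trans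
      (ENNReal.ofReal_le_ofReal (two_mul_exp_le_of_max_le hL hδb hζ.ge))
  calc ENNReal.ofReal (1 - δb) = 1 - ENNReal.ofReal δb := by
        rw [ENNReal.ofReal_sub 1 hδb.le, ENNReal.ofReal_one]
    _ ≤ 1 - μ Eᶜ := tsub_le_tsub_left hbad 1
    _ ≤ μ E := tsub_le_iff_right.mpr (by simpa using measure_univ_le_add_compl (μ := μ) E)
end

section
/- Let T be the balanced rooted tree on n vertices with q levels and branching factors D_1,…,D_q, and define the edge vector t_Δ by setting, for each edge e of T, t_e = (number of vertices in the subtree hanging below e)/n. Then Σ_{e} t_e² ≤ Σ_{l=1}^{q} (Π_{i=1}^{l} D_i)^{−1} + (D_q+2)(D_q+2+2q)/n. -/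
/-!
A vertex `c` on level `l ≤ q - 2` has position `r = c - ZZ l` on its level, and the round-robin
parent map makes its descendants on a level `m ≤ q - 1` exactly the vertices whose position is
`≡ r (mod z l)`, while on the last level the position is first reduced mod `z (q - 1)`. As
`z l ∣ z m` for `m ≤ q - 2`, this gives `z m / z l` descendants on those levels, at most one more
on level `q - 1`, and at most `D q + 1` more on level `q` (where each vertex of level `q - 1` has
at most `D q` children on average). Hence `t_c ≤ 1 / (D 1 ⋯ D l) + (D q + 2) / n`, which holds
on the last two levels too, since a subtree rooted there has at most `D q + 2` vertices. The
subtrees rooted at one level are disjoint, so `∑ t_c ≤ 1` over each level, whence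
`∑ t_c ^ 2 ≤ max t_c` per level; summing over the `q` levels gives the claim.
-/

open scoped Classical

open Finset

theorem card_filter_Ico_add (a N : ℕ) (p : ℕ → Prop) [DecidablePred p] :
    #{x ∈ Ico a (a + N) | p (x - a)} = #{i ∈ range N | p i} := by
  have : Ico a (a + N) = (range N).map (addLeftEmbedding a) := by
    rw [range_eq_Ico, map_add_left_Ico, add_zero]
  rw [this, filter_map, card_map]
  congr 1
  ext i
  simp

theorem card_filter_mod_eq_le_of_div_lt {N e r M : ℕ}
    (h : ∀ i < N, i / e < M) : #{i ∈ range N | i % e = r} ≤ M := by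
  calc #{i ∈ range N | i % e = r} ≤ #(range M) := by
        refine card_le_card_of_injOn (· / e) (fun i hi => ?_) fun i hi j hj hij => ?_
        · simp only [coe_filter, mem_range, Set.mem_ofPred_eq] at hi
          simpa using h i hi.1
        · simp only [coe_filter, mem_range, Set.mem_ofPred_eq] at hi hj
          rw [← Nat.div_add_mod i e, ← Nat.div_add_mod j e, hi.2, hj.2]
          simp only at hij
          rw [hij]
    _ = M := card_range M

theorem card_filter_mod_eq_le (N e r : ℕ) : #{i ∈ range N | i % e = r} ≤ N / e + 1 :=
  card_filter_mod_eq_le_of_div_lt fun _ hi => Nat.lt_succ_of_le (Nat.div_le_div_right hi.le)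

theorem card_filter_mod_eq_le_of_dvd {N e : ℕ} (r : ℕ) (h : e ∣ N) :
    #{i ∈ range N | i % e = r} ≤ N / e :=
  card_filter_mod_eq_le_of_div_lt fun _ hi => Nat.div_lt_div_of_lt_of_dvd h hi

theorem sum_sq_le_of_le_of_sum_le_one {ι R : Type*} [CommSemiring R] [PartialOrder R]
    [IsOrderedRing R] {s : Finset ι} {t : ι → R} {B : R} (ht : ∀ i ∈ s, 0 ≤ t i) (hB : 0 ≤ B)
    (htB : ∀ i ∈ s, t i ≤ B) (hsum : ∑ i ∈ s, t i ≤ 1) : ∑ i ∈ s, t i ^ 2 ≤ B :=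
  calc ∑ i ∈ s, t i ^ 2 ≤ ∑ i ∈ s, B * t i :=
        sum_le_sum fun i hi => sq (t i) ▸ mul_le_mul_of_nonneg_right (htB i hi) (ht i hi)
    _ = B * ∑ i ∈ s, t i := (mul_sum s t B).symm
    _ ≤ B := mul_le_of_le_one_right hB hsum

/-- Writing `i = d * a + e * b + r` with `a = i / d` and `b = i % d / e < d / e + 1`, the code
`a * (d / e + 1) + b` determines `i`, and `a * (d / e) + b ≤ N / e`. -/
theorem card_filter_mod_mod_eq_le (N d e r : ℕ) :
    #{i ∈ range N | i % d % e = r} ≤ N / e + N / d + 1 := by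
  rcases Nat.eq_zero_or_pos d with rfl | hd
  · simpa using card_filter_mod_eq_le N e r
  rcases Nat.eq_zero_or_pos e with rfl | he
  · simpa using card_filter_mod_eq_le N d r
  have hb : ∀ i, i % d / e < d / e + 1 := fun i =>
    Nat.lt_succ_of_le (Nat.div_le_div_right (Nat.mod_lt i hd).le)
  have hcode : ∀ i, (i / d * (d / e + 1) + i % d / e) / (d / e + 1) = i / d ∧
      (i / d * (d / e + 1) + i % d / e) % (d / e + 1) = i % d / e := fun i =>
    (Nat.div_mod_unique (by positivity : 0 < d / e + 1)).2 ⟨by ring, hb i⟩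
  calc #{i ∈ range N | i % d % e = r} ≤ #(range (N / e + N / d + 1)) := by
        refine card_le_card_of_injOn (fun i => i / d * (d / e + 1) + i % d / e)
          (fun i hi => ?_) fun i hi j hj hij => ?_
        · simp only [coe_filter, mem_range, Set.mem_ofPred_eq, coe_range, Set.mem_Iio] at hi ⊢
          have hle : i / d * (d / e) + i % d / e ≤ N / e := by
            rw [Nat.le_div_iff_mul_le he]
            have := Nat.div_add_mod i d
            have := Nat.div_mul_le_self (i % d) e
            nlinarith [Nat.mul_le_mul_left (i / d) (Nat.div_mul_le_self d e)]
          have := Nat.div_le_div_right (c := d) hi.1.le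
          nlinarith
        · simp only [coe_filter, mem_range, Set.mem_ofPred_eq] at hi hj hij
          obtain ⟨hdiv, hmod⟩ := hcode i
          rw [hij, (hcode j).1] at hdiv
          rw [hij, (hcode j).2] at hmod
          rw [← Nat.div_add_mod i d, ← Nat.div_add_mod j d, ← Nat.div_add_mod (i % d) e,
            ← Nat.div_add_mod (j % d) e, hdiv, hmod, hi.2, hj.2]
    _ = _ := card_range _

theorem eq_prod_Icc_of_eq_mul {z D : ℕ → ℕ} {N : ℕ} (h0 : z 0 = 1)
    (h : ∀ l, 1 ≤ l → l ≤ N → z l = z (l - 1) * D l) : ∀ l ≤ N, z l = ∏ i ∈ Icc 1 l, D i := by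
  intro l
  induction l with
  | zero => simp [h0]
  | succ l ih =>
    intro hl
    rw [h (l + 1) (by omega) hl, Nat.add_sub_cancel, ih (by omega), prod_Icc_succ_top (by omega)]

theorem le_mul_of_eq_add_div_succ {a b d : ℕ} (h : a = (a + b + d) / (d + 1)) : b ≤ d * a := by
  have hdiv := Nat.div_add_mod (a + b + d) (d + 1)
  have hmod : (a + b + d) % (d + 1) < d + 1 := Nat.mod_lt _ d.succ_pos
  rw [← h, add_mul, one_mul] at hdiv
  omega

section

variable {ZZ par : ℕ → ℕ} {q n l m x c : ℕ}

def level (ZZ : ℕ → ℕ) (l : ℕ) : Finset ℕ := Ico (ZZ l) (ZZ (l + 1))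

noncomputable def descendants (par : ℕ → ℕ) (n c : ℕ) : Finset ℕ :=
  {x ∈ range n | ∃ j, par^[j] x = c}

@[simp]
theorem mem_level : x ∈ level ZZ l ↔ ZZ l ≤ x ∧ x < ZZ (l + 1) := mem_Ico

theorem eq_of_mem_level (hZZ : Monotone ZZ) (hl : x ∈ level ZZ l) (hm : x ∈ level ZZ m) :
    l = m := by
  rw [mem_level] at hl hm
  by_contra hne
  rcases Nat.lt_or_gt_of_ne hne with h | h
  · have := hZZ (show l + 1 ≤ m by omega); omega
  · have := hZZ (show m + 1 ≤ l by omega); omega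

theorem pairwiseDisjoint_level (hZZ : Monotone ZZ) (s : Set ℕ) :
    s.PairwiseDisjoint (level ZZ) := fun _ _ _ _ hne =>
  disjoint_left.2 fun _ hl hm => hne (eq_of_mem_level hZZ hl hm)

theorem Ico_eq_biUnion_level (hZZ : Monotone ZZ) {a b : ℕ} (hab : a ≤ b) :
    Ico (ZZ a) (ZZ b) = (Ico a b).biUnion (level ZZ) := by
  induction b, hab using Nat.le_induction with
  | base => simp
  | succ b hab ih =>
    rw [← Ico_union_Ico_eq_Ico (hZZ hab) (hZZ b.le_succ), ih, Nat.Ico_succ_right_eq_insert_Ico hab,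
      biUnion_insert, union_comm]
    rfl

theorem card_filter_level_self_le_one (c : ℕ) : #{x ∈ level ZZ l | par^[l - l] x = c} ≤ 1 :=
  card_le_one.2 fun a ha b hb => by simp_all

structure IsLevelledTree (q n : ℕ) (ZZ par : ℕ → ℕ) : Prop where
  ZZ_zero : ZZ 0 = 0
  ZZ_one : ZZ 1 = 1
  monotone_ZZ : Monotone ZZ
  ZZ_top : ZZ (q + 1) = n
  par_zero : par 0 = 0
  par_mem_level : ∀ m < q, ∀ x ∈ level ZZ (m + 1), par x ∈ level ZZ m

namespace IsLevelledTree

theorem n_pos (T : IsLevelledTree q n ZZ par) : 0 < n := by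
  have := T.monotone_ZZ (show 1 ≤ q + 1 by omega)
  rw [T.ZZ_one, T.ZZ_top] at this
  omega

theorem range_eq_biUnion (T : IsLevelledTree q n ZZ par) :
    range n = (range (q + 1)).biUnion (level ZZ) := by
  have := Ico_eq_biUnion_level T.monotone_ZZ (Nat.zero_le (q + 1))
  rwa [T.ZZ_zero, T.ZZ_top, Nat.Ico_zero_eq_range, Nat.Ico_zero_eq_range] at this

theorem Ico_one_eq_biUnion (T : IsLevelledTree q n ZZ par) :
    Ico 1 n = (Icc 1 q).biUnion (level ZZ) := by
  have := Ico_eq_biUnion_level T.monotone_ZZ (show 1 ≤ q + 1 by omega)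
  rwa [T.ZZ_one, T.ZZ_top, Ico_add_one_right_eq_Icc] at this

theorem iterate_mem_level (T : IsLevelledTree q n ZZ par) (hm : m ≤ q) (hx : x ∈ level ZZ m)
    {j : ℕ} (hj : j ≤ m) : par^[j] x ∈ level ZZ (m - j) := by
  induction j with
  | zero => simpa using hx
  | succ j ih =>
    have hmj : m - j = m - (j + 1) + 1 := by omega
    rw [Function.iterate_succ_apply']
    exact T.par_mem_level _ (by omega) _ (hmj ▸ ih (by omega))

theorem iterate_eq_zero (T : IsLevelledTree q n ZZ par) (hm : m ≤ q) (hx : x ∈ level ZZ m)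
    {j : ℕ} (hj : m ≤ j) : par^[j] x = 0 := by
  have h0 : par^[m] x = 0 := by
    have := T.iterate_mem_level hm hx le_rfl
    rw [Nat.sub_self, mem_level, T.ZZ_zero, T.ZZ_one] at this
    omega
  rw [← Nat.sub_add_cancel hj, Function.iterate_add_apply, h0]
  exact Function.iterate_fixed T.par_zero _

theorem exists_iterate_eq_iff (T : IsLevelledTree q n ZZ par) (hm : m ≤ q) (hx : x ∈ level ZZ m)
    (hc : c ∈ level ZZ l) : (∃ j, par^[j] x = c) ↔ l ≤ m ∧ par^[m - l] x = c := by
  refine ⟨fun ⟨j, hj⟩ => ?_, fun h => ⟨_, h.2⟩⟩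
  rcases le_or_gt j m with hjm | hjm
  · have hl := eq_of_mem_level T.monotone_ZZ hc (hj ▸ T.iterate_mem_level hm hx hjm)
    exact ⟨by omega, by rwa [show m - l = j by omega]⟩
  · have hc0 : c = 0 := hj ▸ T.iterate_eq_zero hm hx hjm.le
    have hl : l = 0 := eq_of_mem_level T.monotone_ZZ hc (by simp [hc0, T.ZZ_zero, T.ZZ_one])
    subst hl hc0
    exact ⟨m.zero_le, T.iterate_eq_zero hm hx le_rfl⟩

theorem exists_mem_level (T : IsLevelledTree q n ZZ par) (hx : x < n) :
    ∃ m ≤ q, x ∈ level ZZ m := by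
  rw [← mem_range, T.range_eq_biUnion, mem_biUnion] at hx
  obtain ⟨m, hm, hx⟩ := hx
  exact ⟨m, Nat.lt_succ_iff.1 (mem_range.1 hm), hx⟩

theorem descendants_eq_biUnion (T : IsLevelledTree q n ZZ par) (hc : c ∈ level ZZ l) :
    descendants par n c =
      (Ico l (q + 1)).biUnion fun m => {x ∈ level ZZ m | par^[m - l] x = c} := by
  ext x
  simp only [descendants, mem_filter, mem_range, mem_biUnion, mem_Ico]
  constructor
  · rintro ⟨hx, hxc⟩
    obtain ⟨m, hm, hxm⟩ := T.exists_mem_level hx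
    obtain ⟨hlm, hxc⟩ := (T.exists_iterate_eq_iff hm hxm hc).1 hxc
    exact ⟨m, ⟨hlm, by omega⟩, hxm, hxc⟩
  · rintro ⟨m, ⟨-, hm⟩, hxm, hxc⟩
    refine ⟨?_, _, hxc⟩
    rw [← mem_range, T.range_eq_biUnion, mem_biUnion]
    exact ⟨m, mem_range.2 hm, hxm⟩

theorem card_descendants_eq_sum (T : IsLevelledTree q n ZZ par) (hc : c ∈ level ZZ l) :
    #(descendants par n c) = ∑ m ∈ Ico l (q + 1), #{x ∈ level ZZ m | par^[m - l] x = c} := by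
  rw [T.descendants_eq_biUnion hc, card_biUnion]
  exact (pairwiseDisjoint_level T.monotone_ZZ _).mono fun m => filter_subset _ _

theorem sum_card_descendants_le (T : IsLevelledTree q n ZZ par) (l : ℕ) :
    ∑ c ∈ level ZZ l, #(descendants par n c) ≤ n := by
  have hdisj : (level ZZ l : Set ℕ).PairwiseDisjoint (descendants par n) := by
    refine fun c₁ hc₁ c₂ hc₂ hne => disjoint_left.2 fun x hx₁ hx₂ => hne ?_
    simp only [descendants, mem_filter, mem_range] at hx₁ hx₂
    obtain ⟨m, hm, hxm⟩ := T.exists_mem_level hx₁.1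
    rw [← ((T.exists_iterate_eq_iff hm hxm hc₁).1 hx₁.2).2,
      ← ((T.exists_iterate_eq_iff hm hxm hc₂).1 hx₂.2).2]
  calc ∑ c ∈ level ZZ l, #(descendants par n c)
      = #((level ZZ l).biUnion (descendants par n)) := (card_biUnion hdisj).symm
    _ ≤ #(range n) := card_le_card (biUnion_subset.2 fun c _ => filter_subset _ _)
    _ = n := card_range n

end IsLevelledTree

structure IsBalancedTree (q n : ℕ) (D z ZZ par : ℕ → ℕ) : Prop where
  ZZ_zero : ZZ 0 = 0
  ZZ_succ : ∀ l, ZZ (l + 1) = ZZ l + z l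
  ZZ_top : ZZ (q + 1) = n
  par_zero : par 0 = 0
  par_eq : ∀ m, 1 ≤ m → m ≤ q → ∀ x ∈ level ZZ m, par x = ZZ (m - 1) + (x - ZZ m) % z (m - 1)
  D_pos : ∀ l, 1 ≤ l → l ≤ q - 2 → 0 < D l
  z_eq_prod : ∀ l ≤ q - 2, z l = ∏ i ∈ Icc 1 l, D i
  z_top_le : z q ≤ D q * z (q - 1)

namespace IsBalancedTree

variable {D z : ℕ → ℕ}

theorem z_pos (T : IsBalancedTree q n D z ZZ par) (hl : l ≤ q - 2) : 0 < z l := by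
  rw [T.z_eq_prod l hl]
  exact prod_pos fun i hi => T.D_pos i (mem_Icc.1 hi).1 ((mem_Icc.1 hi).2.trans hl)

theorem z_dvd (T : IsBalancedTree q n D z ZZ par) (hlm : l ≤ m) (hm : m ≤ q - 2) : z l ∣ z m := by
  rw [T.z_eq_prod l (hlm.trans hm), T.z_eq_prod m hm]
  exact prod_dvd_prod_of_subset _ _ _ (Icc_subset_Icc_right hlm)

theorem mem_level_iff_lt_add (T : IsBalancedTree q n D z ZZ par) :
    x ∈ level ZZ m ↔ ZZ m ≤ x ∧ x < ZZ m + z m := by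
  rw [mem_level, T.ZZ_succ]

theorem toIsLevelledTree (T : IsBalancedTree q n D z ZZ par) : IsLevelledTree q n ZZ par where
  ZZ_zero := T.ZZ_zero
  ZZ_one := by rw [T.ZZ_succ, T.ZZ_zero, T.z_eq_prod 0 (Nat.zero_le _)]; rfl
  monotone_ZZ := monotone_nat_of_le_succ fun l => by rw [T.ZZ_succ]; omega
  ZZ_top := T.ZZ_top
  par_zero := T.par_zero
  par_mem_level m hm x hx := by
    have hzm : 0 < z m := by
      rcases Nat.lt_or_ge m (q - 1) with h | h
      · exact T.z_pos (by omega)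
      · obtain rfl : m = q - 1 := by omega
        rw [T.mem_level_iff_lt_add, Nat.sub_add_cancel (by omega)] at hx
        exact Nat.pos_of_mul_pos_left ((show 0 < z q by omega).trans_le T.z_top_le)
    rw [T.mem_level_iff_lt_add, T.par_eq (m + 1) (by omega) (by omega) x hx, Nat.add_sub_cancel]
    exact ⟨Nat.le_add_right _ _, Nat.add_lt_add_left (Nat.mod_lt _ hzm) _⟩

theorem iterate_eq_mod (T : IsBalancedTree q n D z ZZ par) (hlm : l ≤ m) (hm : m ≤ q - 1)
    (hx : x ∈ level ZZ m) : par^[m - l] x = ZZ l + (x - ZZ m) % z l := by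
  induction m, hlm using Nat.le_induction generalizing x with
  | base =>
    rw [T.mem_level_iff_lt_add] at hx
    rw [Nat.sub_self, Function.iterate_zero_apply, Nat.mod_eq_of_lt (by omega)]
    omega
  | succ m hlm ih =>
    have hpx := T.toIsLevelledTree.par_mem_level m (by omega) x hx
    rw [show m + 1 - l = m - l + 1 by omega, Function.iterate_succ_apply, ih (by omega) hpx,
      T.par_eq (m + 1) (by omega) (by omega) x hx, Nat.add_sub_cancel, Nat.add_sub_cancel_left,
      Nat.mod_mod_of_dvd _ (T.z_dvd hlm (by omega))]

theorem iterate_top_eq_mod (T : IsBalancedTree q n D z ZZ par) (hq : 1 ≤ q) (hl : l ≤ q - 1)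
    (hx : x ∈ level ZZ q) : par^[q - l] x = ZZ l + (x - ZZ q) % z (q - 1) % z l := by
  have hpx := T.toIsLevelledTree.par_mem_level (q - 1) (by omega) x
    (by rwa [Nat.sub_add_cancel hq])
  rw [show q - l = q - 1 - l + 1 by omega, Function.iterate_succ_apply,
    T.iterate_eq_mod hl le_rfl hpx, T.par_eq q hq le_rfl x hx, Nat.add_sub_cancel_left]

theorem card_filter_level_eq (T : IsBalancedTree q n D z ZZ par) {k : ℕ} (f : ℕ → ℕ)
    (hc : c ∈ level ZZ l) (h : ∀ x ∈ level ZZ m, par^[k] x = ZZ l + f (x - ZZ m)) :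
    #{x ∈ level ZZ m | par^[k] x = c} = #{i ∈ range (z m) | f i = c - ZZ l} := by
  rw [mem_level] at hc
  rw [← card_filter_Ico_add (ZZ m) (z m) fun i => f i = c - ZZ l, ← T.ZZ_succ]
  congr 1
  refine filter_congr fun x hx => ?_
  rw [h x hx]
  omega

theorem z_top_div_le (T : IsBalancedTree q n D z ZZ par) : z q / z (q - 1) ≤ D q :=
  Nat.div_le_of_le_mul (mul_comm (D q) _ ▸ T.z_top_le)

theorem card_filter_level_le_div_add_one (T : IsBalancedTree q n D z ZZ par) (hlm : l ≤ m)
    (hm : m ≤ q - 1) (hc : c ∈ level ZZ l) :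
    #{x ∈ level ZZ m | par^[m - l] x = c} ≤ z m / z l + 1 := by
  rw [T.card_filter_level_eq (· % z l) hc fun x hx => T.iterate_eq_mod hlm hm hx]
  exact card_filter_mod_eq_le _ _ _

theorem card_filter_level_le_div (T : IsBalancedTree q n D z ZZ par) (hlm : l ≤ m)
    (hm : m ≤ q - 2) (hc : c ∈ level ZZ l) :
    #{x ∈ level ZZ m | par^[m - l] x = c} ≤ z m / z l := by
  rw [T.card_filter_level_eq (· % z l) hc fun x hx => T.iterate_eq_mod hlm (by omega) hx]
  exact card_filter_mod_eq_le_of_dvd _ (T.z_dvd hlm hm)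

theorem card_filter_level_top_le (T : IsBalancedTree q n D z ZZ par) (hq : 1 ≤ q)
    (hl : l ≤ q - 1) (hc : c ∈ level ZZ l) :
    #{x ∈ level ZZ q | par^[q - l] x = c} ≤ z q / z l + D q + 1 := by
  rw [T.card_filter_level_eq (· % z (q - 1) % z l) hc fun x hx => T.iterate_top_eq_mod hq hl hx]
  calc _ ≤ z q / z l + z q / z (q - 1) + 1 := card_filter_mod_mod_eq_le _ _ _ _
    _ ≤ z q / z l + D q + 1 := by gcongr; exact T.z_top_div_le

theorem card_filter_level_top_sub_one_le (T : IsBalancedTree q n D z ZZ par) (hq : 1 ≤ q)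
    (hc : c ∈ level ZZ (q - 1)) :
    #{x ∈ level ZZ q | par^[q - (q - 1)] x = c} ≤ D q + 1 := by
  rw [T.card_filter_level_eq (· % z (q - 1)) hc fun x hx => by
    rw [T.iterate_top_eq_mod hq le_rfl hx, Nat.mod_mod]]
  exact (card_filter_mod_eq_le _ _ _).trans (Nat.add_le_add_right T.z_top_div_le 1)

theorem sum_range_z (T : IsBalancedTree q n D z ZZ par) (k : ℕ) : ∑ m ∈ range k, z m = ZZ k :=
  sum_range_induction _ _ T.ZZ_zero k fun m _ => T.ZZ_succ m

theorem card_descendants_le_of_add_two_le (T : IsBalancedTree q n D z ZZ par) (hl : l + 2 ≤ q)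
    (hc : c ∈ level ZZ l) : (#(descendants par n c) : ℝ) ≤ n / z l + (D q + 2) := by
  have hsplit : ∀ f : ℕ → ℝ,
      ∑ m ∈ Ico l (q + 1), f m = ∑ m ∈ Ico l (q - 1), f m + f (q - 1) + f q := fun f => by
    rw [sum_Ico_succ_top (b := q) (by omega), ← sum_Ico_succ_top (b := q - 1) (by omega),
      Nat.sub_add_cancel (by omega)]
  have hlow : ∀ m ∈ Ico l (q - 1), (#{x ∈ level ZZ m | par^[m - l] x = c} : ℝ) ≤ z m / z l :=
    fun m hm => (Nat.cast_le.2 (T.card_filter_level_le_div (mem_Ico.1 hm).1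
      (by have := (mem_Ico.1 hm).2; omega) hc)).trans Nat.cast_div_le
  have hmid : (#{x ∈ level ZZ (q - 1) | par^[q - 1 - l] x = c} : ℝ) ≤ z (q - 1) / z l + 1 := by
    have := T.card_filter_level_le_div_add_one (by omega) le_rfl hc
    calc _ ≤ ((z (q - 1) / z l : ℕ) : ℝ) + 1 := by exact_mod_cast this
      _ ≤ _ := by gcongr; exact Nat.cast_div_le
  have htop : (#{x ∈ level ZZ q | par^[q - l] x = c} : ℝ) ≤ z q / z l + (D q + 1) := by
    have := T.card_filter_level_top_le (by omega) (by omega) hc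
    calc _ ≤ ((z q / z l : ℕ) : ℝ) + (D q + 1) := by exact_mod_cast this
      _ ≤ _ := by gcongr; exact Nat.cast_div_le
  have hsum : ∑ m ∈ Ico l (q + 1), (z m : ℝ) ≤ n := by
    rw [← T.ZZ_top, ← T.sum_range_z, range_eq_Ico]
    exact_mod_cast sum_le_sum_of_subset (Ico_subset_Ico_left l.zero_le)
  rw [T.toIsLevelledTree.card_descendants_eq_sum hc, Nat.cast_sum, hsplit]
  calc _ ≤ ∑ m ∈ Ico l (q - 1), (z m : ℝ) / z l + (z (q - 1) / z l + 1) +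
        (z q / z l + (D q + 1)) := by
        gcongr with m hm
        exact hlow m hm
    _ = (∑ m ∈ Ico l (q + 1), (z m : ℝ)) / z l + (D q + 2) := by
        rw [hsplit, add_div, add_div, sum_div]
        ring
    _ ≤ n / z l + (D q + 2) := by gcongr

theorem card_descendants_le_of_le_add_one (T : IsBalancedTree q n D z ZZ par) (hl : q ≤ l + 1)
    (hlq : l ≤ q) (hc : c ∈ level ZZ l) : #(descendants par n c) ≤ D q + 2 := by
  have hself := card_filter_level_self_le_one (ZZ := ZZ) (par := par) (l := l) c
  rw [T.toIsLevelledTree.card_descendants_eq_sum hc]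
  obtain rfl | rfl : l = q ∨ q = l + 1 := by omega
  · rw [Nat.Ico_succ_singleton, sum_singleton]
    omega
  · have htop := T.card_filter_level_top_sub_one_le (by omega) (by simpa using hc)
    rw [sum_Ico_succ_top (by omega), Nat.Ico_succ_singleton, sum_singleton]
    simp only [Nat.add_sub_cancel] at htop
    omega

theorem card_descendants_le (T : IsBalancedTree q n D z ZZ par) (hlq : l ≤ q)
    (hc : c ∈ level ZZ l) :
    (#(descendants par n c) : ℝ) ≤ n / ∏ i ∈ Icc 1 l, (D i : ℝ) + (D q + 2) := by
  by_cases hl : l + 2 ≤ q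
  · rw [← Nat.cast_prod, ← T.z_eq_prod l (by omega)]
    exact T.card_descendants_le_of_add_two_le hl hc
  · have : (#(descendants par n c) : ℝ) ≤ D q + 2 := by
      exact_mod_cast T.card_descendants_le_of_le_add_one (by omega) hlq hc
    have : (0 : ℝ) ≤ n / ∏ i ∈ Icc 1 l, (D i : ℝ) := by positivity
    linarith

theorem sum_sq_div_le (T : IsBalancedTree q n D z ZZ par) (hlq : l ≤ q) :
    ∑ c ∈ level ZZ l, ((#(descendants par n c) : ℝ) / n) ^ 2 ≤
      (∏ i ∈ Icc 1 l, (D i : ℝ))⁻¹ + (D q + 2) / n := by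
  have hn : (0 : ℝ) < n := by exact_mod_cast T.toIsLevelledTree.n_pos
  refine sum_sq_le_of_le_of_sum_le_one (fun c _ => by positivity) (by positivity)
    (fun c hc => ?_) ?_
  · rw [← div_div_cancel_left' hn.ne', ← add_div]
    exact div_le_div_of_nonneg_right (T.card_descendants_le hlq hc) hn.le
  · rw [← sum_div, div_le_one hn]
    exact_mod_cast T.toIsLevelledTree.sum_card_descendants_le l

end IsBalancedTree

end

theorem stmt_17_general (n q : ℕ) (D : ℕ → ℕ)
    (hq : 3 ≤ q) (hDpos : ∀ l, 1 ≤ l → l ≤ q → 1 ≤ D l)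
    -- the tree structure: level sizes and parent map
    (z ZZ : ℕ → ℕ) (hz0 : z 0 = 1) (hZZ0 : ZZ 0 = 0)
    (hZZs : ∀ l, ZZ (l + 1) = ZZ l + z l)
    (hzrec : ∀ l, 1 ≤ l → l ≤ q - 2 → z l = z (l - 1) * D l)
    (hzq1 : z (q - 1) = (n - ZZ (q - 1) + D q) / (D q + 1))
    (htot : ZZ (q + 1) = n)
    (par : ℕ → ℕ) (hpar0 : par 0 = 0)
    (hpar : ∀ l, 1 ≤ l → l ≤ q → ∀ c, ZZ l ≤ c → c < ZZ (l + 1) →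
      par c = ZZ (l - 1) + (c - ZZ l) % z (l - 1))
    -- subtree sizes
    (sub : ℕ → ℕ)
    (hsub : ∀ c, sub c =
      ((Finset.range n).filter fun x => ∃ j : ℕ, par^[j] x = c).card) :
    ∑ c ∈ Finset.Ico 1 n, ((sub c : ℝ) / (n : ℝ)) ^ 2 ≤
      ∑ l ∈ Finset.Icc 1 q, (∏ i ∈ Finset.Icc 1 l, (D i : ℝ))⁻¹ +
        ((D q : ℝ) + 2) * ((D q : ℝ) + 2 + 2 * (q : ℝ)) / (n : ℝ) := by
  have hlast : n - ZZ (q - 1) = z (q - 1) + z q := by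
    have := hZZs (q - 1)
    rw [Nat.sub_add_cancel (by omega)] at this
    rw [← htot, hZZs, this]
    omega
  have T : IsBalancedTree q n D z ZZ par :=
    { ZZ_zero := hZZ0
      ZZ_succ := hZZs
      ZZ_top := htot
      par_zero := hpar0
      par_eq := fun m h1 h2 x hx => hpar m h1 h2 x (mem_level.1 hx).1 (mem_level.1 hx).2
      D_pos := fun l h1 h2 => hDpos l h1 (by omega)
      z_eq_prod := eq_prod_Icc_of_eq_mul hz0 hzrec
      z_top_le := le_mul_of_eq_add_div_succ (by rwa [hlast] at hzq1) }
  have hsub' : ∀ c, sub c = #(descendants par n c) := hsub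
  rw [T.toIsLevelledTree.Ico_one_eq_biUnion,
    sum_biUnion (pairwiseDisjoint_level T.toIsLevelledTree.monotone_ZZ _)]
  simp only [hsub']
  calc _ ≤ ∑ l ∈ Icc 1 q, ((∏ i ∈ Icc 1 l, (D i : ℝ))⁻¹ + (D q + 2) / n) :=
        sum_le_sum fun l hl => T.sum_sq_div_le (mem_Icc.1 hl).2
    _ = ∑ l ∈ Icc 1 q, (∏ i ∈ Icc 1 l, (D i : ℝ))⁻¹ + (D q + 2) * q / n := by
        rw [sum_add_distrib, sum_const, Nat.card_Icc, nsmul_eq_mul, Nat.add_sub_cancel]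
        ring
    _ ≤ _ := by gcongr; nlinarith

/-- Norm bound for the edge vector of the balanced rooted tree `T` with branching factors
`D 1, …, D q`: identifying each edge of `T` with its lower endpoint `c ∈ {1, …, n−1}` and
setting `t_c = (size of the subtree rooted at c)/n`,
`Σ_e t_e² ≤ Σ_{l=1}^{q} (Π_{i=1}^{l} D_i)⁻¹ + (D_q+2)(D_q+2+2q)/n`.

The balanced tree on vertex set `{0, …, n−1}` is described by its level sizes
`z 0, …, z q` (`ZZ l` being the number of vertices at levels `< l`) and its parent map
`par` (children are distributed round-robin among the vertices of the previous level);
the subtree size `sub c` counts the vertices `x < n` having `c` as an iterated parent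
(including `x = c`). -/
theorem stmt_17 (n q : ℕ) (D : ℕ → ℕ) (hn : 0 < n)
    (hq : 3 ≤ q) (hDpos : ∀ l, 1 ≤ l → l ≤ q → 1 ≤ D l)
    -- size condition relating n to the branching factors
    (hsize1 : (∑ i ∈ Finset.Icc 1 q, ∏ j ∈ Finset.Icc 1 i, D j) -
        (D q + 1) * ∏ j ∈ Finset.Icc 1 (q - 2), D j < n)
    (hsize2 : n ≤ ∑ i ∈ Finset.Icc 1 q, ∏ j ∈ Finset.Icc 1 i, D j)
    -- the tree structure: level sizes and parent map
    (z ZZ : ℕ → ℕ) (hz0 : z 0 = 1) (hZZ0 : ZZ 0 = 0)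
    (hZZs : ∀ l, ZZ (l + 1) = ZZ l + z l)
    (hzrec : ∀ l, 1 ≤ l → l ≤ q - 2 → z l = z (l - 1) * D l)
    (hzq1 : z (q - 1) = (n - ZZ (q - 1) + D q) / (D q + 1))
    (hzq : z q = n - ZZ q) (htot : ZZ (q + 1) = n)
    (par : ℕ → ℕ) (hpar0 : par 0 = 0)
    (hpar : ∀ l, 1 ≤ l → l ≤ q → ∀ c, ZZ l ≤ c → c < ZZ (l + 1) →
      par c = ZZ (l - 1) + (c - ZZ l) % z (l - 1))
    -- subtree sizes
    (sub : ℕ → ℕ)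
    (hsub : ∀ c, sub c =
      ((Finset.range n).filter fun x => ∃ j : ℕ, par^[j] x = c).card) :
    ∑ c ∈ Finset.Ico 1 n, ((sub c : ℝ) / (n : ℝ)) ^ 2 ≤
      ∑ l ∈ Finset.Icc 1 q, (∏ i ∈ Finset.Icc 1 l, (D i : ℝ))⁻¹ +
        ((D q : ℝ) + 2) * ((D q : ℝ) + 2 + 2 * (q : ℝ)) / (n : ℝ) :=
  stmt_17_general n q D hq hDpos z ZZ hz0 hZZ0 hZZs hzrec hzq1 htot par hpar0 hpar sub hsub
end

section
/- For every integer i ≥ 2, Σ_{j=1}^{i−1} (i/j)^j < (i/3)·i^{i/3} + 3^{i+1}/2. -/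
/-- For every integer `i ≥ 2`, `Σ_{j=1}^{i−1} (i/j)^j < (i/3)·i^{i/3} + 3^{i+1}/2`. -/
theorem stmt_18 (i : ℕ) (hi : 2 ≤ i) :
    ∑ j ∈ Finset.Ico 1 i, ((i : ℝ) / (j : ℝ)) ^ (j : ℕ) <
      ((i : ℝ) / 3) * (i : ℝ) ^ ((i : ℝ) / 3) + (3 : ℝ) ^ (i + 1) / 2 := by
  have hi1 : (1 : ℝ) ≤ (i : ℝ) := by exact_mod_cast Nat.one_le_of_lt hi
  rw [← Finset.sum_filter_add_sum_filter_not (Finset.Ico 1 i) (fun j => 3 * j ≤ i)]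
  have hA : ∑ j ∈ (Finset.Ico 1 i).filter (fun j => 3 * j ≤ i), ((i : ℝ) / (j : ℝ)) ^ (j : ℕ)
      ≤ ((i : ℝ) / 3) * (i : ℝ) ^ ((i : ℝ) / 3) := by
    have hbound : ∀ j ∈ (Finset.Ico 1 i).filter (fun j => 3 * j ≤ i),
        ((i : ℝ) / (j : ℝ)) ^ (j : ℕ) ≤ (i : ℝ) ^ ((i : ℝ) / 3) := by
      intro j hj
      simp only [Finset.mem_filter, Finset.mem_Ico] at hj
      obtain ⟨⟨hj1, _⟩, hj3⟩ := hj
      have hjpos : (0:ℝ) < j := by exact_mod_cast hj1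
      have h1 : ((i:ℝ)/j) ^ (j:ℕ) ≤ (i:ℝ) ^ (j:ℕ) := by
        apply pow_le_pow_left₀ (by positivity)
        calc (i:ℝ)/j ≤ (i:ℝ)/1 := by
              apply div_le_div_of_nonneg_left (by positivity) one_pos
              exact_mod_cast hj1
          _ = i := div_one _
      calc ((i:ℝ)/j) ^ (j:ℕ) ≤ (i:ℝ) ^ (j:ℕ) := h1
        _ = (i:ℝ) ^ (j:ℝ) := (Real.rpow_natCast _ _).symm
        _ ≤ (i:ℝ) ^ ((i:ℝ)/3) := by
            apply Real.rpow_le_rpow_of_exponent_le hi1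
            rw [le_div_iff₀ (by norm_num : (0:ℝ) < 3)]
            have : (3 * j : ℝ) ≤ i := by exact_mod_cast hj3
            linarith
    have hcard : (((Finset.Ico 1 i).filter (fun j => 3 * j ≤ i)).card : ℝ) ≤ (i:ℝ)/3 := by
      have hsub : (Finset.Ico 1 i).filter (fun j => 3 * j ≤ i) ⊆ Finset.Icc 1 (i/3) := by
        intro j hj
        simp only [Finset.mem_filter, Finset.mem_Ico] at hj
        obtain ⟨⟨hj1, _⟩, hj3⟩ := hj
        simp only [Finset.mem_Icc]
        exact ⟨hj1, (Nat.le_div_iff_mul_le (by norm_num)).mpr (by linarith)⟩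
      have h1 : ((Finset.Ico 1 i).filter (fun j => 3 * j ≤ i)).card ≤ i/3 := by
        have := Finset.card_le_card hsub
        simpa [Nat.card_Icc] using this
      calc (((Finset.Ico 1 i).filter (fun j => 3 * j ≤ i)).card : ℝ)
          ≤ ((i/3 : ℕ) : ℝ) := by exact_mod_cast h1
        _ ≤ (i:ℝ)/3 := by exact_mod_cast Nat.cast_div_le
    calc ∑ j ∈ (Finset.Ico 1 i).filter (fun j => 3 * j ≤ i), ((i : ℝ) / (j : ℝ)) ^ (j : ℕ)
        ≤ (((Finset.Ico 1 i).filter (fun j => 3 * j ≤ i)).card : ℝ) * (i:ℝ) ^ ((i:ℝ)/3) := by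
          have := Finset.sum_le_card_nsmul _ _ _ hbound
          simpa [nsmul_eq_mul] using this
      _ ≤ (i:ℝ)/3 * (i:ℝ) ^ ((i:ℝ)/3) := by
          apply mul_le_mul_of_nonneg_right hcard
          positivity
  have hB : ∑ j ∈ (Finset.Ico 1 i).filter (fun j => ¬ 3 * j ≤ i), ((i : ℝ) / (j : ℝ)) ^ (j : ℕ)
      < (3 : ℝ) ^ (i + 1) / 2 := by
    have h3i : (0:ℝ) < 3 ^ i := by positivity
    calc ∑ j ∈ (Finset.Ico 1 i).filter (fun j => ¬ 3 * j ≤ i), ((i : ℝ) / (j : ℝ)) ^ (j : ℕ)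
        ≤ ∑ j ∈ (Finset.Ico 1 i).filter (fun j => ¬ 3 * j ≤ i), (3:ℝ) ^ j := by
          apply Finset.sum_le_sum
          intro j hj
          simp only [Finset.mem_filter, Finset.mem_Ico, not_le] at hj
          obtain ⟨⟨hj1, _⟩, hj3⟩ := hj
          have hjpos : (0:ℝ) < j := by exact_mod_cast hj1
          apply pow_le_pow_left₀ (by positivity)
          rw [div_le_iff₀ hjpos]
          have : (i : ℝ) ≤ 3 * j := by exact_mod_cast le_of_lt hj3
          linarith
      _ ≤ ∑ j ∈ Finset.range i, (3:ℝ) ^ j := by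
          apply Finset.sum_le_sum_of_subset_of_nonneg
          · intro j hj
            simp only [Finset.mem_filter, Finset.mem_Ico] at hj
            exact Finset.mem_range.mpr hj.1.2
          · intro j _ _; positivity
      _ = ((3:ℝ) ^ i - 1) / (3 - 1) := geom_sum_eq (by norm_num) i
      _ < (3 : ℝ) ^ (i + 1) / 2 := by
          rw [pow_succ]
          nlinarith
  exact add_lt_add_of_le_of_lt hA hB
end

section
/- Let B ∈ (0,1] and x ≥ 0. If √8 / (√π · (2e)^{⌊x²/2⌋}) ≥ B/2, then x ≤ √((2.854 − log B)/0.846). -/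
open Real

-- log π ≥ 1.1444
lemma aux_logpi : (1.1444:ℝ) ≤ Real.log Real.pi := by
  rw [Real.le_log_iff_exp_le Real.pi_pos]
  have h1 : Real.exp 1.1444 = Real.exp 1 * Real.exp 0.1444 := by
    rw [← Real.exp_add]; norm_num
  have h2 : Real.exp 0.1444 ≤ 1.15536 := by
    have := Real.exp_bound' (by norm_num : (0:ℝ) ≤ 0.1444) (by norm_num) (n := 4) (by norm_num)
    norm_num [Finset.sum_range_succ, Nat.factorial] at this ⊢
    linarith
  have h3 : Real.exp 1 < 2.7182818286 := Real.exp_one_lt_d9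
  have hpi : (3.141592:ℝ) < Real.pi := Real.pi_gt_d6
  have he : (0:ℝ) < Real.exp 0.1444 := Real.exp_pos _
  rw [h1]
  nlinarith [Real.exp_pos (1:ℝ)]


/-- If the `erfc` truncation error bound `√8/(√π (2e)^{⌊x²/2⌋})` is at least `B/2`, then
`x ≤ √((2.854 − log B)/0.846)`. -/
theorem stmt_19 (B x : ℝ) (hB : B ∈ Set.Ioc (0:ℝ) 1) (hx : 0 ≤ x)
    (h : Real.sqrt 8 / (Real.sqrt Real.pi * (2 * Real.exp 1) ^ ⌊x ^ 2 / 2⌋) ≥ B / 2) :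
    x ≤ Real.sqrt ((2.854 - Real.log B) / 0.846) := by
  obtain ⟨hB0, hB1⟩ := hB
  set n : ℤ := ⌊x ^ 2 / 2⌋ with hn
  have hn0 : (0:ℤ) ≤ n := Int.floor_nonneg.mpr (by positivity)
  have hbase : (0:ℝ) < 2 * Real.exp 1 := by positivity
  have hzp : (0:ℝ) < (2 * Real.exp 1) ^ n := zpow_pos hbase n
  have hsp : (0:ℝ) < Real.sqrt Real.pi := Real.sqrt_pos.mpr Real.pi_pos
  have hD : (0:ℝ) < Real.sqrt Real.pi * (2 * Real.exp 1) ^ n := mul_pos hsp hzp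
  have hBD : B * (Real.sqrt Real.pi * (2 * Real.exp 1) ^ n) ≤ Real.sqrt 8 * 2 := by
    rw [ge_iff_le, div_le_div_iff₀ (by norm_num) hD] at h
    linarith
  -- take logs
  have hlog : Real.log (B * (Real.sqrt Real.pi * (2 * Real.exp 1) ^ n))
      ≤ Real.log (Real.sqrt 8 * 2) :=
    Real.log_le_log (by positivity) hBD
  have hL : Real.log (B * (Real.sqrt Real.pi * (2 * Real.exp 1) ^ n))
      = Real.log B + Real.log Real.pi / 2 + n * (Real.log 2 + 1) := by
    rw [Real.log_mul (ne_of_gt hB0) (ne_of_gt hD), Real.log_mul (ne_of_gt hsp) (ne_of_gt hzp),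
      Real.log_sqrt Real.pi_pos.le, Real.log_zpow,
      Real.log_mul (by norm_num) (Real.exp_ne_zero 1), Real.log_exp]
    ring
  have hR : Real.log (Real.sqrt 8 * 2) = (5/2) * Real.log 2 := by
    rw [Real.log_mul (by positivity) (by norm_num), Real.log_sqrt (by norm_num)]
    have : (8:ℝ) = 2 ^ 3 := by norm_num
    rw [this, Real.log_pow]
    push_cast; ring
  rw [hL, hR] at hlog
  have hx2 : x ^ 2 < 2 * (n:ℝ) + 2 := by
    have := Int.lt_floor_add_one (x ^ 2 / 2)
    rw [← hn] at this
    linarith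
  have hP := aux_logpi
  have hL1 : Real.log 2 < 0.6931471808 := Real.log_two_lt_d9
  have hL2 : (0.6931471803:ℝ) < Real.log 2 := Real.log_two_gt_d9
  have hBle : Real.log B ≤ 0 := Real.log_nonpos hB0.le hB1
  have hn0' : (0:ℝ) ≤ (n:ℝ) := by exact_mod_cast hn0
  rw [show (2.854 - Real.log B) / 0.846 = (2.854 - Real.log B) / 0.846 from rfl]
  have hgoal : x ^ 2 ≤ (2.854 - Real.log B) / 0.846 := by
    rw [le_div_iff₀ (by norm_num)]
    nlinarith [mul_nonneg hn0' (by linarith : (0:ℝ) ≤ Real.log 2 - 0.692)]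
  calc x = Real.sqrt (x ^ 2) := by rw [Real.sqrt_sq hx]
    _ ≤ Real.sqrt ((2.854 - Real.log B) / 0.846) := Real.sqrt_le_sqrt hgoal
end
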